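/- Let N be an odd positive integer. For all N×N complex matrices X and Y, tr(X†·Y) = N · Σ_{v ∈ (ZMod N)²} conj(W_X(v)) · W_Y(v), where W_X(v) = (1/N)·tr(A(v)·X) is the discrete Wigner function of X. In particular the map X ↦ W_X is (up to the factor √N) an isometry from the Hilbert–Schmidt inner product to ℓ² of the discrete phase space. -/

import Mathlib

open Matrix BigOperators

noncomputable section

/-- `ω = exp(2πi/N)`, a primitive `N`-th root of unity. -/
def omegaN (N : ℕ) : ℂ := Complex.exp (2 * Real.pi * Complex.I / N)

/-- The shift operator `x(q)|k⟩ = |k+q⟩`. -/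
def shiftOp (N : ℕ) [NeZero N] (q : ZMod N) : Matrix (ZMod N) (ZMod N) ℂ :=
  Matrix.of fun k l => if k = l + q then 1 else 0

/-- The boost operator `z(p)|k⟩ = ω^{pk}|k⟩`. -/
def boostOp (N : ℕ) [NeZero N] (p : ZMod N) : Matrix (ZMod N) (ZMod N) ℂ :=
  Matrix.diagonal fun k => omegaN N ^ (p * k).val

/-- The Weyl operator `w(p,q) = ω^{−2⁻¹pq} z(p) x(q)`. -/
def weylOp (N : ℕ) [NeZero N] (p q : ZMod N) : Matrix (ZMod N) (ZMod N) ℂ :=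
  omegaN N ^ ((-(2⁻¹ : ZMod N) * p * q).val) • (boostOp N p * shiftOp N q)

/-- The parity operator `A(0,0)|x⟩ = |−x⟩`. -/
def parityOp (N : ℕ) [NeZero N] : Matrix (ZMod N) (ZMod N) ℂ :=
  Matrix.of fun k l => if k = -l then 1 else 0

/-- The phase space operators `A(p,q) = w(p,q) A(0,0) w(p,q)†`. -/
def phaseOp (N : ℕ) [NeZero N] (a : ZMod N × ZMod N) : Matrix (ZMod N) (ZMod N) ℂ :=
  weylOp N a.1 a.2 * parityOp N * (weylOp N a.1 a.2)ᴴ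

/-- The discrete Wigner function `W_X(v) = (1/N)·tr(A(v)·X)`. -/
def wigner (N : ℕ) [NeZero N] (X : Matrix (ZMod N) (ZMod N) ℂ) (v : ZMod N × ZMod N) : ℂ :=
  (1 / (N : ℂ)) * (phaseOp N v * X).trace

/-!
The phase space operators are Hermitian with entries `A(p,q)ᵢⱼ = [i + j = 2q] ω^{p(i-j)}`.
For odd `N` doubling is a bijection of `ZMod N`, so in `∑_{p,q} A(p,q)ᵢⱼ A(p,q)ₖₗ` the sum over
`q` forces `i + j = k + l`, and orthogonality of the characters `p ↦ ω^{pt}` forces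
`i - j = l - k`: this is the completeness relation `∑_v A(v)ᵢⱼ A(v)ₖₗ = N δᵢₗ δⱼₖ`. Any family of
matrices with this property satisfies `∑_v tr(A(v) X) tr(A(v) Y) = N tr(X Y)`; apply it to `Xᴴ`
and `Y`, using `conj tr(A(v) X) = tr(A(v) Xᴴ)`.
-/

theorem Matrix.sum_trace_mul_mul_trace_mul {ι n R : Type*} [Fintype ι] [Fintype n] [DecidableEq n]
    [CommSemiring R] (A : ι → Matrix n n R) (c : R)
    (hA : ∀ i j k l, ∑ v, A v i j * A v k l = if i = l ∧ j = k then c else 0)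
    (X Y : Matrix n n R) :
    ∑ v, (A v * X).trace * (A v * Y).trace = c * (X * Y).trace := by
  calc ∑ v, (A v * X).trace * (A v * Y).trace
      = ∑ i, ∑ j, ∑ k, ∑ l, (∑ v, A v i j * A v k l) * (X j i * Y l k) := by
        simp only [trace, diag, mul_apply, Finset.sum_mul]
        simp only [Finset.mul_sum]
        refine Finset.sum_comm.trans (Finset.sum_congr rfl fun i _ => ?_)
        refine Finset.sum_comm.trans (Finset.sum_congr rfl fun j _ => ?_)
        refine Finset.sum_comm.trans (Finset.sum_congr rfl fun k _ => ?_)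
        refine Finset.sum_comm.trans (Finset.sum_congr rfl fun l _ => ?_)
        exact Finset.sum_congr rfl fun v _ => by ring
    _ = c * (X * Y).trace := by
        simp only [hA, ite_and, ite_mul, zero_mul, Finset.sum_ite_eq, Finset.mem_univ, if_true,
          trace, diag_apply, mul_apply, Finset.mul_sum]
        exact Finset.sum_comm

theorem ZMod.isUnit_two_of_odd {N : ℕ} (hN : Odd N) : IsUnit (2 : ZMod N) := by
  exact_mod_cast (ZMod.isUnit_iff_coprime 2 N).mpr hN.coprime_two_left

open ZMod (stdAddChar)

section PhaseSpace

variable (N : ℕ) [NeZero N]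

lemma omegaN_pow_val (a : ZMod N) : omegaN N ^ a.val = stdAddChar a := by
  rw [ZMod.stdAddChar_apply, ZMod.toCircle_apply, omegaN, ← Complex.exp_nat_mul]
  congr 1
  ring

lemma weylOp_apply (p q i j : ZMod N) :
    weylOp N p q i j = if i = j + q then stdAddChar (-2⁻¹ * p * q + p * i) else 0 := by
  simp [weylOp, boostOp, shiftOp, omegaN_pow_val, AddChar.map_add_eq_mul]

lemma parityOp_conjTranspose : (parityOp N)ᴴ = parityOp N := by
  ext i j
  simp [parityOp, eq_neg_iff_add_eq_zero, add_comm]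

lemma phaseOp_conjTranspose (v : ZMod N × ZMod N) : (phaseOp N v)ᴴ = phaseOp N v := by
  simp [phaseOp, conjTranspose_mul, parityOp_conjTranspose, Matrix.mul_assoc]

lemma phaseOp_apply (p q i j : ZMod N) :
    phaseOp N (p, q) i j = if i + j = 2 * q then stdAddChar (p * (i - j)) else 0 := by
  have hcol (k : ZMod N) : i = -k + q ↔ k = q - i := by constructor <;> rintro rfl <;> ring
  have hrow : j = q - i + q ↔ i + j = 2 * q := by constructor <;> intro h <;> linear_combination h
  simp only [phaseOp, parityOp, mul_apply, weylOp_apply, of_apply, mul_ite, mul_one, mul_zero,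
    Finset.sum_ite_eq', Finset.mem_univ, if_true, hcol, conjTranspose_apply, RCLike.star_def,
    ite_mul, zero_mul, hrow]
  split_ifs
  · rw [← AddChar.map_neg_eq_conj, ← AddChar.map_add_eq_mul]
    congr 1
    ring
  · simp

lemma sum_phaseOp_mul_phaseOp (hN : Odd N) (i j k l : ZMod N) :
    ∑ v, phaseOp N v i j * phaseOp N v k l = if i = l ∧ j = k then (N : ℂ) else 0 := by
  have h2 := ZMod.isUnit_two_of_odd hN
  have hmid (c : ℂ) : (∑ q : ZMod N, if i + j = 2 * q ∧ k + l = 2 * q then c else 0)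
      = if i + j = k + l then c else 0 := by
    refine (Equiv.sum_comp (Units.mulLeft h2.unit)
      (fun q => if i + j = q ∧ k + l = q then c else 0)).trans ?_
    simp [ite_and, eq_comm]
  have hdiag : i + j = k + l ∧ i - j + (k - l) = 0 ↔ i = l ∧ j = k := by
    refine ⟨fun ⟨hs, hd⟩ => ⟨?_, ?_⟩, by rintro ⟨rfl, rfl⟩; constructor <;> ring⟩
    · exact h2.mul_left_cancel (by linear_combination hs + hd)
    · exact h2.mul_left_cancel (by linear_combination hs - hd)
  simp only [Fintype.sum_prod_type, phaseOp_apply, ite_zero_mul_ite_zero,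
    ← AddChar.map_add_eq_mul, ← mul_add, hmid]
  rw [Finset.sum_ite_irrel]
  simp [AddChar.sum_mulShift _ (ZMod.isPrimitive_stdAddChar N), ← ite_and, hdiag]

lemma star_wigner (X : Matrix (ZMod N) (ZMod N) ℂ) (v : ZMod N × ZMod N) :
    starRingEnd ℂ (wigner N X v) = (1 / (N : ℂ)) * (phaseOp N v * Xᴴ).trace := by
  rw [wigner, map_mul, ← Complex.star_def, ← trace_conjTranspose, conjTranspose_mul,
    phaseOp_conjTranspose, trace_mul_comm]
  simp

end PhaseSpace

/-- for odd `N`, the Hilbert–Schmidt inner product of two matrices equals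
`N` times the `ℓ²` inner product of their Wigner functions:
`tr(X†·Y) = N · Σ_v conj(W_X(v)) · W_Y(v)`. -/
theorem wigner_isometry (N : ℕ) [NeZero N] (hN : Odd N)
    (X Y : Matrix (ZMod N) (ZMod N) ℂ) :
    (Xᴴ * Y).trace
      = (N : ℂ) * ∑ v : ZMod N × ZMod N, (starRingEnd ℂ) (wigner N X v) * wigner N Y v := by
  have hN0 : (N : ℂ) ≠ 0 := Nat.cast_ne_zero.mpr (NeZero.ne N)
  have hframe := sum_trace_mul_mul_trace_mul (phaseOp N) (N : ℂ)
    (sum_phaseOp_mul_phaseOp N hN) Xᴴ Y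
  simp_rw [star_wigner, wigner]
  field_simp
  rw [← Finset.sum_div, hframe]
  field_simp
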